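/- Let G be a finite group, let 0 < δ ≤ 1/|G|, let q be a vector of convex weights on G with q(h) ≥ δ for all h ∈ G, and let p be any vector of convex weights on G. Define p' = q ∗ p and the relative entropy to the uniform distribution K(a) = ∑_{g∈G} a(g)·log(|G|·a(g)) (with the convention 0·log 0 = 0) for any vector of convex weights a. Then K(p') ≤ K(p), and K(p') = K(p) if and only if p = p̂, the uniform vector p̂(g) = 1/|G|. In particular, the Kullback–Leibler divergence of p(t) from the uniform distribution is a strict Lyapunov function for the convolution dynamics whenever the T-step composite weights are uniformly bounded below by δ. -/

import Mathlib

/-- A vector of convex weights on a finite type: nonnegative entries summing to 1. -/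
def IsConvexWeights {G : Type*} [Fintype G] (s : G → ℝ) : Prop :=
  (∀ g, 0 ≤ s g) ∧ ∑ g, s g = 1

/-- Group convolution of weight vectors: `(q ∗ p)(g) = ∑ h, q(h) p(h⁻¹ g)`. -/
def groupConv {G : Type*} [Group G] [Fintype G] (q p : G → ℝ) : G → ℝ :=
  fun g => ∑ h : G, q h * p (h⁻¹ * g)

/-- Relative entropy (Kullback–Leibler divergence) of a convex-weight vector with
respect to the uniform distribution on a finite group:
`K(a) = ∑ g, a(g) log(|G| a(g))` (note `Real.log 0 = 0`, so `0 · log 0 = 0`). -/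
noncomputable def relEntUniform {G : Type*} [Fintype G] (a : G → ℝ) : ℝ :=
  ∑ g : G, a g * Real.log ((Fintype.card G : ℝ) * a g)

/-!
Write `φ(x) = x log x`. For convex weights `a`, `K(a) = ∑ φ(a g) + log |G|`. Jensen's inequality
at each point gives `φ ∘ (q ∗ p) ≤ q ∗ (φ ∘ p)`, and convolving with a probability vector
preserves total mass, so summing over `G` yields `K(q ∗ p) ≤ K(p)`. If equality holds, it holds
pointwise, and the equality case of Jensen for the strictly convex `φ` with strictly positive
weights `q` forces `p` to be constant, hence uniform.
-/

open Finset

section GroupConv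

variable {G : Type*} [Group G] [Fintype G]

theorem sum_groupConv (q p : G → ℝ) :
    ∑ g, groupConv q p g = (∑ h, q h) * ∑ g, p g := by
  simp only [groupConv]
  rw [sum_comm, sum_mul]
  refine sum_congr rfl fun h _ => ?_
  rw [← mul_sum, ← Equiv.sum_comp (Equiv.mulLeft h⁻¹) p]
  rfl

theorem groupConv_const (q : G → ℝ) (c : ℝ) :
    groupConv q (fun _ => c) = fun _ => (∑ h, q h) * c := by
  funext g
  simp only [groupConv, sum_mul]

theorem IsConvexWeights.groupConv {q p : G → ℝ} (hq : IsConvexWeights q)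
    (hp : IsConvexWeights p) : IsConvexWeights (groupConv q p) :=
  ⟨fun _ => sum_nonneg fun h _ => mul_nonneg (hq.1 h) (hp.1 _),
    by rw [sum_groupConv, hq.2, hp.2, one_mul]⟩

variable {φ : ℝ → ℝ} {q p : G → ℝ}

theorem ConvexOn.map_groupConv_le (hφ : ConvexOn ℝ (Set.Ici 0) φ) (hq : IsConvexWeights q)
    (hp : ∀ g, 0 ≤ p g) (g : G) :
    φ (groupConv q p g) ≤ groupConv q (φ ∘ p) g := by
  simpa only [groupConv, smul_eq_mul, Function.comp_apply] using
    hφ.map_sum_le (t := univ) (p := fun h => p (h⁻¹ * g)) (fun h _ => hq.1 h) hq.2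
      (fun h _ => hp _)

theorem ConvexOn.sum_map_groupConv_le (hφ : ConvexOn ℝ (Set.Ici 0) φ) (hq : IsConvexWeights q)
    (hp : ∀ g, 0 ≤ p g) :
    ∑ g, φ (groupConv q p g) ≤ ∑ g, φ (p g) :=
  calc ∑ g, φ (groupConv q p g) ≤ ∑ g, groupConv q (φ ∘ p) g :=
        sum_le_sum fun g _ => hφ.map_groupConv_le hq hp g
    _ = ∑ g, φ (p g) := by rw [sum_groupConv, hq.2, one_mul, Function.comp_def]

theorem StrictConvexOn.eq_const_of_map_groupConv_one_eq (hφ : StrictConvexOn ℝ (Set.Ici 0) φ)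
    (hq : ∑ h, q h = 1) (hq0 : ∀ h, 0 < q h) (hp : ∀ g, 0 ≤ p g)
    (heq : φ (groupConv q p 1) = groupConv q (φ ∘ p) 1) :
    p = fun _ => p 1 := by
  have hconst := (hφ.map_sum_eq_iff_of_pos (t := univ) (p := fun h => p (h⁻¹ * 1))
    (fun h _ => hq0 h) hq (fun h _ => hp _)).mp (by simpa [groupConv] using heq)
  funext x
  simpa using hconst (mem_univ x⁻¹) (mem_univ 1)

theorem StrictConvexOn.sum_map_groupConv_eq_iff (hφ : StrictConvexOn ℝ (Set.Ici 0) φ)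
    (hq : IsConvexWeights q) (hq0 : ∀ h, 0 < q h) (hp : ∀ g, 0 ≤ p g) :
    ∑ g, φ (groupConv q p g) = ∑ g, φ (p g) ↔ ∃ c, p = fun _ => c := by
  refine ⟨fun heq => ⟨p 1, ?_⟩, ?_⟩
  · have hsum : ∑ g, φ (groupConv q p g) = ∑ g, groupConv q (φ ∘ p) g := by
      rw [heq, sum_groupConv, hq.2, one_mul, Function.comp_def]
    have hpointwise := (sum_eq_sum_iff_of_le fun g _ =>
      hφ.convexOn.map_groupConv_le hq hp g).mp hsum
    exact hφ.eq_const_of_map_groupConv_one_eq hq.2 hq0 hp (hpointwise 1 (mem_univ 1))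
  · rintro ⟨c, rfl⟩
    rw [groupConv_const, hq.2, one_mul]

end GroupConv

section RelEnt

variable {G : Type*} [Fintype G] {a : G → ℝ}

theorem IsConvexWeights.relEntUniform_eq (ha : IsConvexWeights a) :
    relEntUniform a = ∑ g, a g * Real.log (a g) + Real.log (Fintype.card G) := by
  have hG : Nonempty G := by
    by_contra h
    simpa [not_nonempty_iff.mp h] using ha.2
  have hcard : (Fintype.card G : ℝ) ≠ 0 := Nat.cast_ne_zero.mpr Fintype.card_ne_zero
  rw [← one_mul (Real.log _), ← ha.2, sum_mul, relEntUniform, ← sum_add_distrib]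
  refine sum_congr rfl fun g _ => ?_
  rcases (ha.1 g).eq_or_lt with h | h
  · simp [← h]
  · rw [Real.log_mul hcard h.ne']
    ring

theorem IsConvexWeights.eq_uniform_of_eq_const (ha : IsConvexWeights a) {c : ℝ}
    (hc : a = fun _ => c) : a = fun _ => 1 / (Fintype.card G : ℝ) := by
  have hsum := ha.2
  simp only [hc, sum_const, card_univ, nsmul_eq_mul] at hsum
  rw [hc]
  funext
  exact eq_div_of_mul_eq (left_ne_zero_of_mul_eq_one hsum) (by rw [mul_comm, hsum])

end RelEnt

theorem relative_entropy_strict_lyapunov_general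
    {G : Type*} [Group G] [Fintype G]
    (δ : ℝ) (hδ0 : 0 < δ)
    (q : G → ℝ) (hq : IsConvexWeights q) (hqδ : ∀ h : G, δ ≤ q h)
    (p : G → ℝ) (hp : IsConvexWeights p) :
    relEntUniform (groupConv q p) ≤ relEntUniform p
    ∧ (relEntUniform (groupConv q p) = relEntUniform p
        ↔ p = fun _ => 1 / (Fintype.card G : ℝ)) := by
  have hq0 : ∀ h, 0 < q h := fun h => hδ0.trans_le (hqδ h)
  rw [(hq.groupConv hp).relEntUniform_eq, hp.relEntUniform_eq, add_left_inj,
    Real.strictConvexOn_mul_log.sum_map_groupConv_eq_iff hq hq0 hp.1]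
  refine ⟨by simpa using Real.convexOn_mul_log.sum_map_groupConv_le hq hp.1,
    fun ⟨_, hc⟩ => hp.eq_uniform_of_eq_const hc, fun hu => ⟨_, hu⟩⟩

theorem relative_entropy_strict_lyapunov
    {G : Type*} [Group G] [Fintype G]
    (δ : ℝ) (hδ0 : 0 < δ) (hδ1 : δ ≤ 1 / (Fintype.card G : ℝ))
    (q : G → ℝ) (hq : IsConvexWeights q) (hqδ : ∀ h : G, δ ≤ q h)
    (p : G → ℝ) (hp : IsConvexWeights p) :
    relEntUniform (groupConv q p) ≤ relEntUniform p
    ∧ (relEntUniform (groupConv q p) = relEntUniform p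
        ↔ p = fun _ => 1 / (Fintype.card G : ℝ)) :=
  relative_entropy_strict_lyapunov_general δ hδ0 q hq hqδ p hp
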